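/- arXiv:2110.09611 — 4 statements merged into one kernel-verified Lean document; each statement's English description precedes it below -/
import Mathlib

section
/- For any orthonormal set {z, u, v, w} of vectors in ℝ^8, the octonionic triple cross product satisfies ⟨X(u,v,w), z⟩ = -⟨X(z,v,w), u⟩. -/
/-! Right multiplication `R_a : x ↦ x a` satisfies `R_a + R_a^* = 2 a₀`, i.e.
`⟨x a, y⟩ + ⟨y a, x⟩ = 2 a₀ ⟨x, y⟩`; this is the symmetry `C_ijk + C_kji = 2 δ_j0 δ_ik` of the
structure constants. For an orthonormal quadruple every inner-product term of `X3` vanishes, so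
`X(u,v,w) = -u a` and `X(z,v,w) = -z a` with `a = v̄ w`, and the claim is that identity at
`x = u`, `y = z`, where `⟨u, z⟩ = 0`. -/

open scoped RealInnerProductSpace

noncomputable section

abbrev Oct : Type := EuclideanSpace ℝ (Fin 8)

def octe (i : Fin 8) : Oct := EuclideanSpace.single i 1

def plusTriples : List (Fin 8 × Fin 8 × Fin 8) :=
  [(1,2,3),(1,4,5),(1,7,6),(2,4,6),(2,5,7),(3,4,7),(3,6,5)]

/-- Completely skew-symmetric structure tensor taking the value `+1` on the
triples 123, 145, 176, 246, 257, 347, 365. -/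
def eps (i j k : Fin 8) : ℝ :=
  if plusTriples.any (fun t => decide ((i,j,k) = t ∨ (i,j,k) = (t.2.1, t.2.2, t.1) ∨
      (i,j,k) = (t.2.2, t.1, t.2.1))) then 1
  else if plusTriples.any (fun t => decide ((i,j,k) = (t.1, t.2.2, t.2.1) ∨
      (i,j,k) = (t.2.2, t.2.1, t.1) ∨ (i,j,k) = (t.2.1, t.1, t.2.2))) then -1
  else 0

/-- Structure constants of octonion multiplication:
`e_0 e_i = e_i e_0 = e_i` and `e_i e_j = -δ_ij e_0 + ε_ijk e_k` for `i,j ≥ 1`. -/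
def structC (i j k : Fin 8) : ℝ :=
  if i = 0 then (if j = k then 1 else 0)
  else if j = 0 then (if i = k then 1 else 0)
  else (if i = j ∧ k = 0 then (-1:ℝ) else 0) + eps i j k

/-- Octonion multiplication on ℝ⁸. -/
def octMul (x y : Oct) : Oct := WithLp.toLp 2 (fun k => ∑ i, ∑ j, x i * y j * structC i j k)

/-- Octonionic conjugation. -/
def octConj (x : Oct) : Oct := WithLp.toLp 2 (fun k => if k = 0 then x 0 else -(x k))

/-- The triple cross product `X(u,v,w) = -u(v̄w) + ⟨u,v⟩w + ⟨v,w⟩u - ⟨w,u⟩v`. -/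
def X3 (u v w : Oct) : Oct :=
  -octMul u (octMul (octConj v) w) + ⟪u, v⟫ • w + ⟪v, w⟫ • u - ⟪w, u⟫ • v

/-- The double cross product `u × v = uv + ⟨u,v⟩ e_0` (on imaginary octonions). -/
def cross2 (u v : Oct) : Oct := octMul u v + ⟪u, v⟫ • octe 0

-- Integer-valued copies of `eps` and `structC`, on which the kernel can decide identities.
def epsInt (i j k : Fin 8) : ℤ :=
  if plusTriples.any (fun t => decide ((i,j,k) = t ∨ (i,j,k) = (t.2.1, t.2.2, t.1) ∨
      (i,j,k) = (t.2.2, t.1, t.2.1))) then 1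
  else if plusTriples.any (fun t => decide ((i,j,k) = (t.1, t.2.2, t.2.1) ∨
      (i,j,k) = (t.2.2, t.2.1, t.1) ∨ (i,j,k) = (t.2.1, t.1, t.2.2))) then -1
  else 0

def structCInt (i j k : Fin 8) : ℤ :=
  if i = 0 then (if j = k then 1 else 0)
  else if j = 0 then (if i = k then 1 else 0)
  else (if i = j ∧ k = 0 then (-1:ℤ) else 0) + epsInt i j k

lemma eps_eq_cast (i j k : Fin 8) : eps i j k = epsInt i j k := by
  unfold eps epsInt; split_ifs <;> norm_num

lemma structC_eq_cast (i j k : Fin 8) : structC i j k = structCInt i j k := by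
  unfold structC structCInt; rw [eps_eq_cast]; split_ifs <;> push_cast <;> ring

lemma structCInt_add_structCInt_swap :
    ∀ i j k : Fin 8, structCInt i j k + structCInt k j i = if j = 0 ∧ i = k then 2 else 0 := by
  decide

lemma structC_add_structC_swap (i j k : Fin 8) :
    structC i j k + structC k j i = if j = 0 ∧ i = k then 2 else 0 := by
  rw [structC_eq_cast, structC_eq_cast, ← Int.cast_add, structCInt_add_structCInt_swap]
  split_ifs <;> norm_num

lemma oct_inner_eq_sum (x y : Oct) : ⟪x, y⟫ = ∑ i, x i * y i := by
  simp [PiLp.inner_apply, mul_comm]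

lemma inner_octMul_eq_sum (x a y : Oct) : ⟪octMul x a, y⟫
    = ∑ p : Fin 8 × Fin 8 × Fin 8, x p.1 * a p.2.1 * structC p.1 p.2.1 p.2.2 * y p.2.2 := by
  simp only [oct_inner_eq_sum, octMul, Finset.sum_mul, Fintype.sum_prod_type]
  rw [Finset.sum_comm]
  exact Finset.sum_congr rfl fun i _ => Finset.sum_comm

lemma inner_octMul_add_inner_octMul_swap (x y a : Oct) :
    ⟪octMul x a, y⟫ + ⟪octMul y a, x⟫ = 2 * a 0 * ⟪x, y⟫ := by
  have swapped : ⟪octMul y a, x⟫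
      = ∑ p : Fin 8 × Fin 8 × Fin 8, x p.1 * a p.2.1 * structC p.2.2 p.2.1 p.1 * y p.2.2 := by
    rw [inner_octMul_eq_sum]
    exact Fintype.sum_equiv ⟨fun p => (p.2.2, p.2.1, p.1), fun p => (p.2.2, p.2.1, p.1),
      fun _ => rfl, fun _ => rfl⟩ _ _ fun _ => by dsimp; ring
  have termwise (p : Fin 8 × Fin 8 × Fin 8) :
      x p.1 * a p.2.1 * structC p.1 p.2.1 p.2.2 * y p.2.2
        + x p.1 * a p.2.1 * structC p.2.2 p.2.1 p.1 * y p.2.2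
      = if p.2.1 = 0 ∧ p.1 = p.2.2 then 2 * a 0 * (x p.1 * y p.2.2) else 0 := by
    have hs := structC_add_structC_swap p.1 p.2.1 p.2.2
    split_ifs at hs ⊢ with h
    · rw [h.1] at hs ⊢
      linear_combination x p.1 * a 0 * y p.2.2 * hs
    · linear_combination x p.1 * a p.2.1 * y p.2.2 * hs
  rw [inner_octMul_eq_sum, swapped, ← Finset.sum_add_distrib,
    Finset.sum_congr rfl fun p _ => termwise p]
  simp [oct_inner_eq_sum, Fintype.sum_prod_type, ite_and, Finset.mul_sum]

lemma X3_eq_neg_octMul_of_orthogonal {u v w : Oct}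
    (huv : ⟪u, v⟫ = 0) (hvw : ⟪v, w⟫ = 0) (hwu : ⟪w, u⟫ = 0) :
    X3 u v w = -octMul u (octMul (octConj v) w) := by
  simp [X3, huv, hvw, hwu]

theorem stmt0_general (z u v w : Oct)
    (hzu : ⟪z, u⟫ = 0) (hzv : ⟪z, v⟫ = 0) (hzw : ⟪z, w⟫ = 0)
    (huv : ⟪u, v⟫ = 0) (huw : ⟪u, w⟫ = 0) (hvw : ⟪v, w⟫ = 0) :
    ⟪X3 u v w, z⟫ = -⟪X3 z v w, u⟫ := by
  rw [X3_eq_neg_octMul_of_orthogonal huv hvw (real_inner_comm u w ▸ huw),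
    X3_eq_neg_octMul_of_orthogonal hzv hvw (real_inner_comm z w ▸ hzw),
    inner_neg_left, inner_neg_left, neg_neg]
  have h := inner_octMul_add_inner_octMul_swap u z (octMul (octConj v) w)
  rw [real_inner_comm z u, hzu, mul_zero] at h
  linarith

/-- For any orthonormal set `{z, u, v, w}` in ℝ⁸,
`⟨X(u,v,w), z⟩ = -⟨X(z,v,w), u⟩`. -/
theorem stmt0 (z u v w : Oct)
    (hz : ‖z‖ = 1) (hu : ‖u‖ = 1) (hv : ‖v‖ = 1) (hw : ‖w‖ = 1)
    (hzu : ⟪z, u⟫ = 0) (hzv : ⟪z, v⟫ = 0) (hzw : ⟪z, w⟫ = 0)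
    (huv : ⟪u, v⟫ = 0) (huw : ⟪u, w⟫ = 0) (hvw : ⟪v, w⟫ = 0) :
    ⟪X3 u v w, z⟫ = -⟪X3 z v w, u⟫ :=
  stmt0_general z u v w hzu hzv hzw huv huw hvw
end
end

section
/- For all pairwise orthogonal octonions u, v, w, the identity -(w̄ v) ū = (ū v) w̄ holds, where the bar denotes octonionic conjugation. -/
open scoped RealInnerProductSpace

noncomputable section

/-!
Polarizing `x̄ x = ‖x‖²` gives `x̄ y = -(ȳ x)` for orthogonal `x, y`, and polarizing the
alternative-algebra identity `(a x) x̄ = ‖x‖² a` gives `(a w) ū = -((a u) w̄)` for orthogonal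
`u, w`. Hence `-((w̄ v) ū) = (v̄ w) ū = -((v̄ u) w̄) = (ū v) w̄`. Both polarized identities are
checked in coordinates from the multiplication table.
-/

lemma octMul_apply_zero (x y : Oct) :
    octMul x y 0 = x 0 * y 0 - x 1 * y 1 - x 2 * y 2 - x 3 * y 3
      - x 4 * y 4 - x 5 * y 5 - x 6 * y 6 - x 7 * y 7 := by
  simp +decide only [octMul, WithLp.ofLp_toLp, Fin.sum_univ_eight, structC, eps, plusTriples,
    if_true, if_false]
  ring

lemma octMul_apply_one (x y : Oct) :
    octMul x y 1 = x 0 * y 1 + x 1 * y 0 + x 2 * y 3 - x 3 * y 2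
      + x 4 * y 5 - x 5 * y 4 - x 6 * y 7 + x 7 * y 6 := by
  simp +decide only [octMul, WithLp.ofLp_toLp, Fin.sum_univ_eight, structC, eps, plusTriples,
    if_true, if_false]
  ring

lemma octMul_apply_two (x y : Oct) :
    octMul x y 2 = x 0 * y 2 - x 1 * y 3 + x 2 * y 0 + x 3 * y 1
      + x 4 * y 6 + x 5 * y 7 - x 6 * y 4 - x 7 * y 5 := by
  simp +decide only [octMul, WithLp.ofLp_toLp, Fin.sum_univ_eight, structC, eps, plusTriples,
    if_true, if_false]
  ring

lemma octMul_apply_three (x y : Oct) :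
    octMul x y 3 = x 0 * y 3 + x 1 * y 2 - x 2 * y 1 + x 3 * y 0
      + x 4 * y 7 - x 5 * y 6 + x 6 * y 5 - x 7 * y 4 := by
  simp +decide only [octMul, WithLp.ofLp_toLp, Fin.sum_univ_eight, structC, eps, plusTriples,
    if_true, if_false]
  ring

lemma octMul_apply_four (x y : Oct) :
    octMul x y 4 = x 0 * y 4 - x 1 * y 5 - x 2 * y 6 - x 3 * y 7
      + x 4 * y 0 + x 5 * y 1 + x 6 * y 2 + x 7 * y 3 := by
  simp +decide only [octMul, WithLp.ofLp_toLp, Fin.sum_univ_eight, structC, eps, plusTriples,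
    if_true, if_false]
  ring

lemma octMul_apply_five (x y : Oct) :
    octMul x y 5 = x 0 * y 5 + x 1 * y 4 - x 2 * y 7 + x 3 * y 6
      - x 4 * y 1 + x 5 * y 0 - x 6 * y 3 + x 7 * y 2 := by
  simp +decide only [octMul, WithLp.ofLp_toLp, Fin.sum_univ_eight, structC, eps, plusTriples,
    if_true, if_false]
  ring

lemma octMul_apply_six (x y : Oct) :
    octMul x y 6 = x 0 * y 6 + x 1 * y 7 + x 2 * y 4 - x 3 * y 5
      - x 4 * y 2 + x 5 * y 3 + x 6 * y 0 - x 7 * y 1 := by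
  simp +decide only [octMul, WithLp.ofLp_toLp, Fin.sum_univ_eight, structC, eps, plusTriples,
    if_true, if_false]
  ring

lemma octMul_apply_seven (x y : Oct) :
    octMul x y 7 = x 0 * y 7 - x 1 * y 6 + x 2 * y 5 + x 3 * y 4
      - x 4 * y 3 - x 5 * y 2 + x 6 * y 1 + x 7 * y 0 := by
  simp +decide only [octMul, WithLp.ofLp_toLp, Fin.sum_univ_eight, structC, eps, plusTriples,
    if_true, if_false]
  ring

lemma octConj_apply (x : Oct) (k : Fin 8) : octConj x k = if k = 0 then x 0 else -x k := rfl

lemma inner_eq_sum_coords (x y : Oct) : ⟪x, y⟫ = x 0 * y 0 + x 1 * y 1 + x 2 * y 2 + x 3 * y 3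
    + x 4 * y 4 + x 5 * y 5 + x 6 * y 6 + x 7 * y 7 := by
  simp [PiLp.inner_apply, Fin.sum_univ_eight, mul_comm]

lemma octMul_neg_left (x y : Oct) : octMul (-x) y = -octMul x y := by
  ext k
  simp only [octMul, PiLp.neg_apply, WithLp.ofLp_toLp, neg_mul, Finset.sum_neg_distrib]

lemma octMul_octConj_add_octMul_octConj (x y : Oct) :
    octMul (octConj x) y + octMul (octConj y) x = (2 * ⟪x, y⟫) • octe 0 := by
  ext k
  fin_cases k <;>
  simp only [Fin.zero_eta, Fin.mk_one, Fin.reduceFinMk, PiLp.add_apply, PiLp.smul_apply,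
      smul_eq_mul, octe, PiLp.single_apply, octMul_apply_zero, octMul_apply_one, octMul_apply_two,
      octMul_apply_three, octMul_apply_four, octMul_apply_five, octMul_apply_six,
      octMul_apply_seven, octConj_apply, Fin.reduceEq, ↓reduceIte, inner_eq_sum_coords] <;>
  ring

lemma octMul_octMul_octConj_add_octMul_octMul_octConj (a x y : Oct) :
    octMul (octMul a x) (octConj y) + octMul (octMul a y) (octConj x) = (2 * ⟪x, y⟫) • a := by
  ext k
  fin_cases k <;>
  simp only [Fin.zero_eta, Fin.mk_one, Fin.reduceFinMk, PiLp.add_apply, PiLp.smul_apply,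
      smul_eq_mul, octMul_apply_zero, octMul_apply_one, octMul_apply_two, octMul_apply_three,
      octMul_apply_four, octMul_apply_five, octMul_apply_six, octMul_apply_seven, octConj_apply,
      Fin.reduceEq, ↓reduceIte, inner_eq_sum_coords] <;>
  ring

lemma octMul_octConj_eq_neg_of_inner_eq_zero {x y : Oct} (h : ⟪x, y⟫ = 0) :
    octMul (octConj x) y = -octMul (octConj y) x :=
  eq_neg_of_add_eq_zero_left (by simp [octMul_octConj_add_octMul_octConj, h])

lemma octMul_octMul_octConj_eq_neg_of_inner_eq_zero (a : Oct) {x y : Oct} (h : ⟪x, y⟫ = 0) :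
    octMul (octMul a x) (octConj y) = -octMul (octMul a y) (octConj x) :=
  eq_neg_of_add_eq_zero_left (by simp [octMul_octMul_octConj_add_octMul_octMul_octConj, h])

/-- For pairwise orthogonal octonions `u, v, w`: `-(w̄ v) ū = (ū v) w̄`. -/
theorem stmt3 (u v w : Oct)
    (huv : ⟪u, v⟫ = 0) (huw : ⟪u, w⟫ = 0) (hvw : ⟪v, w⟫ = 0) :
    -octMul (octMul (octConj w) v) (octConj u)
      = octMul (octMul (octConj u) v) (octConj w) := by
  calc -octMul (octMul (octConj w) v) (octConj u)
      = octMul (octMul (octConj v) w) (octConj u) := by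
        rw [octMul_octConj_eq_neg_of_inner_eq_zero (real_inner_comm v w ▸ hvw), octMul_neg_left,
          neg_neg]
    _ = -octMul (octMul (octConj v) u) (octConj w) :=
        octMul_octMul_octConj_eq_neg_of_inner_eq_zero _ (real_inner_comm u w ▸ huw)
    _ = octMul (octMul (octConj u) v) (octConj w) := by
        rw [← octMul_neg_left, octMul_octConj_eq_neg_of_inner_eq_zero huv]
end
end

section
/- There is no parallel local section of the sphere bundle E¹_{3,8} → G(3,8) near the point P₀ = e_0 ∧ e_1 ∧ e_2. Concretely: there is no smooth map V from a neighborhood of P₀ in the Grassmannian of oriented 3-planes of ℝ^8 to the unit sphere of ℝ^8 with V(P) ⊥ P for all P and with covariant derivative (D/dt)(V∘Q) := π_{Q_t^⊥}((V∘Q)') identically zero along every smooth curve Q of 3-planes. -/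
noncomputable section

open Matrix

/-- Matrices of size 8×8 (as plain function type, to have the sup-norm
smooth structure). -/
abbrev Mat8 : Type := Fin 8 → Fin 8 → ℝ

/-- `A` represents (the orthogonal projection onto) a 3-dimensional
subspace of ℝ⁸. -/
def IsProj3 (A : Mat8) : Prop :=
  Matrix.of A * Matrix.of A = Matrix.of A ∧ (Matrix.of A)ᵀ = Matrix.of A ∧
    (Matrix.of A).trace = 3

/-- The base point: the projection onto `span{e₀,e₁,e₂}`. -/
def P₀ : Mat8 := fun i j => if i = j ∧ (i : ℕ) < 3 then 1 else 0

/-! Auxiliary development -/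
open Real

def e8 (j : Fin 8) : Fin 8 → ℝ := fun i => if i = j then 1 else 0

def uvec (j k : Fin 8) (ε t : ℝ) : Fin 8 → ℝ := fun i =>
  Real.cos ε * e8 2 i + Real.sin ε * Real.cos t * e8 j i + Real.sin ε * Real.sin t * e8 k i

def AQ (j k : Fin 8) (ε t : ℝ) : Mat8 := fun a b =>
  (if a = b ∧ (a : ℕ) < 2 then 1 else 0) + uvec j k ε t a * uvec j k ε t b

lemma sum_mul_e8 (c : ℝ) (l : Fin 8) (w : Fin 8 → ℝ) :
    ∑ m, c * e8 l m * w m = c * w l := by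
  rw [Finset.sum_eq_single l] <;> simp +contextual [e8]

lemma dot_uvec (j k : Fin 8) (ε t : ℝ) (w : Fin 8 → ℝ) :
    ∑ m, uvec j k ε t m * w m =
      Real.cos ε * w 2 + Real.sin ε * Real.cos t * w j + Real.sin ε * Real.sin t * w k := by
  simp only [uvec, add_mul, Finset.sum_add_distrib, sum_mul_e8]

lemma uvec_two {j k : Fin 8} (hj : 2 < (j : ℕ)) (hk : 2 < (k : ℕ)) (ε t : ℝ) :
    uvec j k ε t 2 = Real.cos ε := by
  have h1 : (2 : Fin 8) ≠ j := by intro h; rw [← h] at hj; simp at hj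
  have h2 : (2 : Fin 8) ≠ k := by intro h; rw [← h] at hk; simp at hk
  simp [uvec, e8, h1, h2]

lemma uvec_j {j k : Fin 8} (hj : 2 < (j : ℕ)) (hjk : j ≠ k) (ε t : ℝ) :
    uvec j k ε t j = Real.sin ε * Real.cos t := by
  have h1 : j ≠ 2 := by intro h; rw [h] at hj; simp at hj
  simp [uvec, e8, h1, hjk]

lemma uvec_k {j k : Fin 8} (hk : 2 < (k : ℕ)) (hjk : j ≠ k) (ε t : ℝ) :
    uvec j k ε t k = Real.sin ε * Real.sin t := by
  have h2 : k ≠ 2 := by intro h; rw [h] at hk; simp at hk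
  simp [uvec, e8, h2, (Ne.symm hjk)]

lemma uvec_zero {j k : Fin 8} (hj : 2 < (j : ℕ)) (hk : 2 < (k : ℕ)) (ε t : ℝ) :
    uvec j k ε t 0 = 0 := by
  have h1 : (0 : Fin 8) ≠ j := by intro h; rw [← h] at hj; simp at hj
  have h2 : (0 : Fin 8) ≠ k := by intro h; rw [← h] at hk; simp at hk
  have h3 : (0 : Fin 8) ≠ 2 := by decide
  simp [uvec, e8, h1, h2, h3]

lemma uvec_one {j k : Fin 8} (hj : 2 < (j : ℕ)) (hk : 2 < (k : ℕ)) (ε t : ℝ) :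
    uvec j k ε t 1 = 0 := by
  have h1 : (1 : Fin 8) ≠ j := by intro h; rw [← h] at hj; simp at hj
  have h2 : (1 : Fin 8) ≠ k := by intro h; rw [← h] at hk; simp at hk
  have h3 : (1 : Fin 8) ≠ 2 := by decide
  simp [uvec, e8, h1, h2, h3]

lemma norm_uvec {j k : Fin 8} (hj : 2 < (j : ℕ)) (hk : 2 < (k : ℕ)) (hjk : j ≠ k) (ε t : ℝ) :
    ∑ m, uvec j k ε t m * uvec j k ε t m = 1 := by
  rw [dot_uvec, uvec_two hj hk, uvec_j hj hjk, uvec_k hk hjk]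
  have h1 := Real.sin_sq_add_cos_sq ε
  have h2 := Real.sin_sq_add_cos_sq t
  nlinarith

lemma mulVec_AQ (j k : Fin 8) (ε t : ℝ) (w : Fin 8 → ℝ) :
    (Matrix.of (AQ j k ε t)).mulVec w = fun i : Fin 8 =>
      (if (i : ℕ) < 2 then w i else 0) + uvec j k ε t i *
        (Real.cos ε * w 2 + Real.sin ε * Real.cos t * w j + Real.sin ε * Real.sin t * w k) := by
  funext i
  rw [← dot_uvec j k ε t w]
  show ∑ m, AQ j k ε t i m * w m = _
  simp only [AQ, add_mul, Finset.sum_add_distrib, mul_assoc, Finset.mul_sum]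
  congr 1
  have : ∀ m : Fin 8, ((if i = m ∧ (i:ℕ) < 2 then (1:ℝ) else 0)) * w m
      = if (i:ℕ) < 2 then (if m = i then w m else 0) else 0 := by
    intro m
    by_cases h1 : (i:ℕ) < 2 <;> by_cases h2 : i = m <;> simp [h1, h2, eq_comm]
  rw [Finset.sum_congr rfl fun m _ => this m]
  by_cases h1 : (i:ℕ) < 2 <;> simp [h1]

lemma uvec_lt2 {j k : Fin 8} (hj : 2 < (j : ℕ)) (hk : 2 < (k : ℕ)) (ε t : ℝ)
    (a : Fin 8) (ha : (a : ℕ) < 2) : uvec j k ε t a = 0 := by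
  have : a = 0 ∨ a = 1 := by
    rcases (by omega : (a : ℕ) = 0 ∨ (a : ℕ) = 1) with h | h
    · exact Or.inl (Fin.ext (by simpa using h))
    · exact Or.inr (Fin.ext (by simpa using h))
  rcases this with h | h <;> subst h
  · exact uvec_zero hj hk ε t
  · exact uvec_one hj hk ε t

lemma isProj3_AQ {j k : Fin 8} (hj : 2 < (j : ℕ)) (hk : 2 < (k : ℕ)) (hjk : j ≠ k)
    (ε t : ℝ) : IsProj3 (AQ j k ε t) := by
  have h1 := Real.sin_sq_add_cos_sq ε
  have h2 := Real.sin_sq_add_cos_sq t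
  refine ⟨?_, ?_, ?_⟩
  · ext a b
    show ∑ m, AQ j k ε t a m * AQ j k ε t m b = AQ j k ε t a b
    have hmv := congrFun (mulVec_AQ j k ε t (fun m => AQ j k ε t m b)) a
    simp only [Matrix.mulVec, dotProduct, Matrix.of_apply] at hmv
    rw [hmv]
    have e2 : AQ j k ε t 2 b = Real.cos ε * uvec j k ε t b := by
      show (if _ then (1:ℝ) else 0) + _ = _
      rw [if_neg (fun h => absurd h.2 (by decide)), uvec_two hj hk, zero_add]
    have ej : AQ j k ε t j b = Real.sin ε * Real.cos t * uvec j k ε t b := by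
      show (if _ then (1:ℝ) else 0) + _ = _
      rw [if_neg (fun h => absurd h.2 (by omega)), uvec_j hj hjk, zero_add]
    have ek : AQ j k ε t k b = Real.sin ε * Real.sin t * uvec j k ε t b := by
      show (if _ then (1:ℝ) else 0) + _ = _
      rw [if_neg (fun h => absurd h.2 (by omega)), uvec_k hk hjk, zero_add]
    rw [e2, ej, ek]
    have hbr : Real.cos ε * (Real.cos ε * uvec j k ε t b)
        + Real.sin ε * Real.cos t * (Real.sin ε * Real.cos t * uvec j k ε t b)
        + Real.sin ε * Real.sin t * (Real.sin ε * Real.sin t * uvec j k ε t b)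
        = uvec j k ε t b := by
      linear_combination uvec j k ε t b * h1 + uvec j k ε t b * Real.sin ε ^ 2 * h2
    rw [hbr]
    by_cases ha : (a:ℕ) < 2
    · rw [if_pos ha, uvec_lt2 hj hk ε t a ha, zero_mul, add_zero]
    · rw [if_neg ha, zero_add]
      show _ = (if _ then (1:ℝ) else 0) + _
      rw [if_neg (fun h => ha h.2), zero_add]
  · ext a b
    show AQ j k ε t b a = AQ j k ε t a b
    simp only [AQ]
    by_cases h : a = b
    · subst h; ring
    · rw [if_neg (fun hc => h hc.1.symm), if_neg (fun hc => h hc.1)]; ring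
  · show ∑ a, AQ j k ε t a a = 3
    simp only [AQ, Finset.sum_add_distrib]
    rw [norm_uvec hj hk hjk]
    rw [Fin.sum_univ_eight]
    have c0 : ((0:Fin 8):ℕ) < 2 := by decide
    have c1 : ((1:Fin 8):ℕ) < 2 := by decide
    have c2 : ¬((2:Fin 8):ℕ) < 2 := by decide
    have c3 : ¬((3:Fin 8):ℕ) < 2 := by decide
    have c4 : ¬((4:Fin 8):ℕ) < 2 := by decide
    have c5 : ¬((5:Fin 8):ℕ) < 2 := by decide
    have c6 : ¬((6:Fin 8):ℕ) < 2 := by decide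
    have c7 : ¬((7:Fin 8):ℕ) < 2 := by decide
    simp only [true_and]
    rw [if_pos c0, if_pos c1, if_neg c2, if_neg c3, if_neg c4, if_neg c5, if_neg c6, if_neg c7]
    norm_num

lemma AQ_eps_zero (j k : Fin 8) (t : ℝ) : AQ j k 0 t = P₀ := by
  have hu : ∀ i, uvec j k 0 t i = e8 2 i := by
    intro i; simp [uvec]
  funext a b
  simp only [AQ, hu, P₀, e8]
  by_cases h : a = b
  · subst h
    by_cases h2 : a = 2
    · subst h2; norm_num
    · have h3 : (a:ℕ) ≠ 2 := fun hc => h2 (Fin.ext hc)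
      have h4 : ((a:ℕ) < 3) ↔ ((a:ℕ) < 2) := by omega
      simp [h2, h4]
  · simp [h]
    rintro rfl rfl; exact h rfl

lemma isProj3_P₀ : IsProj3 P₀ := by
  rw [← AQ_eps_zero 3 4 0]
  exact isProj3_AQ (by decide) (by decide) (by decide) 0 0

lemma contDiff_uvec_entry (j k : Fin 8) (ε : ℝ) (a : Fin 8) :
    ContDiff ℝ (⊤ : ℕ∞) (fun t : ℝ => uvec j k ε t a) := by
  unfold uvec
  exact (contDiff_const.add ((contDiff_const.mul Real.contDiff_cos).mul contDiff_const)).add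
    ((contDiff_const.mul Real.contDiff_sin).mul contDiff_const)

lemma contDiff_AQ (j k : Fin 8) (ε : ℝ) : ContDiff ℝ (⊤ : ℕ∞) (fun t => AQ j k ε t) := by
  apply contDiff_pi.mpr; intro a; apply contDiff_pi.mpr; intro b
  exact contDiff_const.add ((contDiff_uvec_entry j k ε a).mul (contDiff_uvec_entry j k ε b))

/-- parametrized version for the tube-lemma argument -/
def BQ (j k : Fin 8) (p : ℝ × ℝ × ℝ) : Mat8 := fun a b =>
  (if a = b ∧ (a : ℕ) < 2 then 1 else 0) +
    (Real.cos p.1 * e8 2 a + Real.sin p.1 * p.2.1 * e8 j a + Real.sin p.1 * p.2.2 * e8 k a) *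
    (Real.cos p.1 * e8 2 b + Real.sin p.1 * p.2.1 * e8 j b + Real.sin p.1 * p.2.2 * e8 k b)

lemma BQ_eq (j k : Fin 8) (ε t : ℝ) : BQ j k (ε, Real.cos t, Real.sin t) = AQ j k ε t := rfl

lemma BQ_zero (j k : Fin 8) (q : ℝ × ℝ) : BQ j k (0, q) = P₀ := by
  have : ∀ a, Real.cos 0 * e8 2 a + Real.sin 0 * q.1 * e8 j a + Real.sin 0 * q.2 * e8 k a
      = e8 2 a := by intro a; simp
  have h2 := AQ_eps_zero j k 0
  rw [← h2]
  funext a b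
  show _ + _ = _ + _
  rw [this a, this b]
  have : ∀ c, uvec j k 0 0 c = e8 2 c := by intro c; simp [uvec]
  rw [show uvec j k 0 0 a * uvec j k 0 0 b = e8 2 a * e8 2 b by rw [this a, this b]]

lemma continuous_BQ (j k : Fin 8) : Continuous (BQ j k) := by
  apply continuous_pi; intro a; apply continuous_pi; intro b
  unfold BQ
  fun_prop

section Key
variable {U : Set Mat8} {V : Mat8 → EuclideanSpace ℝ (Fin 8)}
variable {j k : Fin 8} {ε : ℝ}

/-- The coordinate functions along the loop. -/
def Wf (V : Mat8 → EuclideanSpace ℝ (Fin 8)) (j k : Fin 8) (ε : ℝ) (i : Fin 8) : ℝ → ℝ :=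
  fun t => V (AQ j k ε t) i

set_option maxHeartbeats 1000000 in
lemma key (hUo : IsOpen U)
    (hV : ContDiffOn ℝ (⊤ : ℕ∞) V U)
    (hOrth : ∀ A ∈ U, IsProj3 A → (Matrix.of A).mulVec (fun i => V A i) = 0)
    (hPar : ∀ Q : ℝ → Mat8, ContDiff ℝ (⊤ : ℕ∞) Q → (∀ t, Q t ∈ U ∧ IsProj3 (Q t)) →
      ∀ t : ℝ, (1 - Matrix.of (Q t)).mulVec (fun i => deriv (fun s => V (Q s) i) t) = 0)
    (hj : 2 < (j : ℕ)) (hk : 2 < (k : ℕ)) (hjk : j ≠ k)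
    (hε0 : 0 < ε) (hεπ : ε < π / 2)
    (hmem : ∀ t, AQ j k ε t ∈ U) :
    V (AQ j k ε 0) 2 = 0 ∧ V (AQ j k ε 0) j = 0 ∧ V (AQ j k ε 0) k = 0 := by
  have hπ := Real.pi_pos
  have hcos : 0 < Real.cos ε := Real.cos_pos_of_mem_Ioo ⟨by linarith, hεπ⟩
  have hsin : 0 < Real.sin ε := Real.sin_pos_of_pos_of_lt_pi hε0 (by linarith)
  have hcos1 : Real.cos ε < 1 := by
    rcases lt_or_eq_of_le (Real.cos_le_one ε) with h | h
    · exact h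
    · exfalso
      have := (Real.cos_eq_one_iff_of_lt_of_lt (x := ε) (by linarith) (by linarith)).mp h
      linarith
  set W : Fin 8 → ℝ → ℝ := Wf V j k ε with hWdef
  -- differentiability of the coordinate functions
  have hWd : ∀ (i : Fin 8) (t : ℝ), DifferentiableAt ℝ (W i) t := by
    intro i t
    have h1 : DifferentiableAt ℝ V (AQ j k ε t) :=
      (hV.differentiableOn (by simp)).differentiableAt (hUo.mem_nhds (hmem t))
    have h2 : DifferentiableAt ℝ (fun s : ℝ => AQ j k ε s) t :=
      ((contDiff_AQ j k ε).differentiable (by simp)).differentiableAt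
    exact ((EuclideanSpace.proj i).differentiableAt.comp _ (h1.comp t h2))
  have hW : ∀ (i : Fin 8) (t : ℝ), HasDerivAt (W i) (deriv (W i) t) t :=
    fun i t => (hWd i t).hasDerivAt
  set D : Fin 8 → ℝ → ℝ := fun i t => deriv (W i) t with hDdef
  -- the orthogonality relation
  have hS : ∀ t, Real.cos ε * W 2 t + Real.sin ε * Real.cos t * W j t
      + Real.sin ε * Real.sin t * W k t = 0 := by
    intro t
    have ho := hOrth (AQ j k ε t) (hmem t) (isProj3_AQ hj hk hjk ε t)
    rw [mulVec_AQ] at ho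
    have h2 := congrFun ho 2
    simp only [Pi.zero_apply] at h2
    rw [if_neg (by decide : ¬ (((2:Fin 8):ℕ) < 2)), uvec_two hj hk, zero_add] at h2
    have := mul_eq_zero.mp h2
    rcases this with h | h
    · exact absurd h (ne_of_gt hcos)
    · exact h
  -- the parallel-transport relations
  have hPall := hPar (fun t => AQ j k ε t) (contDiff_AQ j k ε)
    (fun t => ⟨hmem t, isProj3_AQ hj hk hjk ε t⟩)
  have hPeq : ∀ t, (fun i => D i t) = fun i : Fin 8 =>
      (if (i:ℕ) < 2 then D i t else 0) + uvec j k ε t i *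
        (Real.cos ε * D 2 t + Real.sin ε * Real.cos t * D j t
          + Real.sin ε * Real.sin t * D k t) := by
    intro t
    have hp := hPall t
    rw [Matrix.sub_mulVec, Matrix.one_mulVec, sub_eq_zero] at hp
    have h2 := mulVec_AQ j k ε t (fun i => D i t)
    exact hp.trans h2
  have hP2 : ∀ t, D 2 t = Real.cos ε *
      (Real.cos ε * D 2 t + Real.sin ε * Real.cos t * D j t
        + Real.sin ε * Real.sin t * D k t) := by
    intro t
    have := congrFun (hPeq t) 2
    rwa [if_neg (by decide : ¬ (((2:Fin 8):ℕ) < 2)), uvec_two hj hk, zero_add] at this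
  have hPj : ∀ t, D j t = Real.sin ε * Real.cos t *
      (Real.cos ε * D 2 t + Real.sin ε * Real.cos t * D j t
        + Real.sin ε * Real.sin t * D k t) := by
    intro t
    have := congrFun (hPeq t) j
    rwa [if_neg (by omega), uvec_j hj hjk, zero_add] at this
  have hPk : ∀ t, D k t = Real.sin ε * Real.sin t *
      (Real.cos ε * D 2 t + Real.sin ε * Real.cos t * D j t
        + Real.sin ε * Real.sin t * D k t) := by
    intro t
    have := congrFun (hPeq t) k
    rwa [if_neg (by omega), uvec_k hk hjk, zero_add] at this
  -- derivative of the orthogonality relation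
  have hSderiv : ∀ t, Real.cos ε * D 2 t
      + Real.sin ε * ((-Real.sin t) * W j t + Real.cos t * D j t)
      + Real.sin ε * (Real.cos t * W k t + Real.sin t * D k t) = 0 := by
    intro t
    have h1 : HasDerivAt (fun s => Real.cos ε * W 2 s
        + Real.sin ε * (Real.cos s * W j s) + Real.sin ε * (Real.sin s * W k s))
        (Real.cos ε * D 2 t
          + Real.sin ε * ((-Real.sin t) * W j t + Real.cos t * D j t)
          + Real.sin ε * (Real.cos t * W k t + Real.sin t * D k t)) t :=
      (((hW 2 t).const_mul _).add (((Real.hasDerivAt_cos t).mul (hW j t)).const_mul _)).add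
        (((Real.hasDerivAt_sin t).mul (hW k t)).const_mul _)
    have h0 : (fun s => Real.cos ε * W 2 s
        + Real.sin ε * (Real.cos s * W j s) + Real.sin ε * (Real.sin s * W k s))
        = fun _ : ℝ => (0:ℝ) := by
      funext s
      have := hS s
      ring_nf
      ring_nf at this
      linarith
    rw [h0] at h1
    exact h1.unique (hasDerivAt_const t 0)
  -- functions a and b
  set a : ℝ → ℝ := fun t => -Real.sin ε * W 2 t
    + Real.cos ε * (Real.cos t * W j t + Real.sin t * W k t) with hadef
  set b : ℝ → ℝ := fun t => -Real.sin t * W j t + Real.cos t * W k t with hbdef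
  have hεs := Real.sin_sq_add_cos_sq ε
  have ha' : ∀ t, HasDerivAt a (Real.cos ε * b t) t := by
    intro t
    have h1 : HasDerivAt a ((-Real.sin ε) * D 2 t
        + Real.cos ε * (((-Real.sin t) * W j t + Real.cos t * D j t)
          + (Real.cos t * W k t + Real.sin t * D k t))) t := by
      rw [hadef]
      exact ((hW 2 t).const_mul _).add
        ((((Real.hasDerivAt_cos t).mul (hW j t)).add
          ((Real.hasDerivAt_sin t).mul (hW k t))).const_mul _)
    have h2 : (-Real.sin ε) * D 2 t
        + Real.cos ε * (((-Real.sin t) * W j t + Real.cos t * D j t)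
          + (Real.cos t * W k t + Real.sin t * D k t)) = Real.cos ε * b t := by
      have hts := Real.sin_sq_add_cos_sq t
      rw [hbdef]
      linear_combination (-Real.sin ε) * hP2 t + (Real.cos ε * Real.cos t) * hPj t
        + (Real.cos ε * Real.sin t) * hPk t
        + (Real.sin ε * Real.cos ε * (Real.cos ε * D 2 t + Real.sin ε * Real.cos t * D j t
            + Real.sin ε * Real.sin t * D k t)) * hts
    rw [h2] at h1
    exact h1
  have hb' : ∀ t, HasDerivAt b (-(Real.cos ε) * a t) t := by
    intro t
    have h1 : HasDerivAt b ((-Real.cos t) * W j t + (-Real.sin t) * D j t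
        + ((-Real.sin t) * W k t + Real.cos t * D k t)) t := by
      rw [hbdef]
      have hneg : HasDerivAt (fun s => -Real.sin s) (-Real.cos t) t :=
        (Real.hasDerivAt_sin t).neg
      exact (hneg.mul (hW j t)).add ((Real.hasDerivAt_cos t).mul (hW k t))
    have h2 : (-Real.cos t) * W j t + (-Real.sin t) * D j t
        + ((-Real.sin t) * W k t + Real.cos t * D k t) = -(Real.cos ε) * a t := by
      have hts := Real.sin_sq_add_cos_sq t
      rw [hadef]
      linear_combination (-Real.sin t) * hPj t + (Real.cos t) * hPk t
        + (-Real.sin ε) * hS t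
        + (Real.cos t * W j t + Real.sin t * W k t) * hεs
    rw [h2] at h1
    exact h1
  -- p and q are constant
  set μ := Real.cos ε with hμdef
  set p : ℝ → ℝ := fun t => Real.cos (μ * t) * a t - Real.sin (μ * t) * b t with hpdef
  set q : ℝ → ℝ := fun t => Real.sin (μ * t) * a t + Real.cos (μ * t) * b t with hqdef
  have hμt : ∀ t : ℝ, HasDerivAt (fun s : ℝ => μ * s) μ t := by
    intro t
    simpa using (hasDerivAt_id t).const_mul μ
  have hp' : ∀ t, HasDerivAt p 0 t := by
    intro t
    have hc : HasDerivAt (fun s => Real.cos (μ * s)) (-Real.sin (μ * t) * μ) t :=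
      (Real.hasDerivAt_cos (μ * t)).comp t (hμt t)
    have hs : HasDerivAt (fun s => Real.sin (μ * s)) (Real.cos (μ * t) * μ) t :=
      (Real.hasDerivAt_sin (μ * t)).comp t (hμt t)
    have h1 : HasDerivAt p ((-Real.sin (μ * t) * μ) * a t + Real.cos (μ * t) * (μ * b t)
        - ((Real.cos (μ * t) * μ) * b t + Real.sin (μ * t) * (-μ * a t))) t := by
      rw [hpdef]
      exact (hc.mul (ha' t)).sub (hs.mul (hb' t))
    have h2 : (-Real.sin (μ * t) * μ) * a t + Real.cos (μ * t) * (μ * b t)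
        - ((Real.cos (μ * t) * μ) * b t + Real.sin (μ * t) * (-μ * a t)) = 0 := by ring
    rw [h2] at h1
    exact h1
  have hq' : ∀ t, HasDerivAt q 0 t := by
    intro t
    have hc : HasDerivAt (fun s => Real.cos (μ * s)) (-Real.sin (μ * t) * μ) t :=
      (Real.hasDerivAt_cos (μ * t)).comp t (hμt t)
    have hs : HasDerivAt (fun s => Real.sin (μ * s)) (Real.cos (μ * t) * μ) t :=
      (Real.hasDerivAt_sin (μ * t)).comp t (hμt t)
    have h1 : HasDerivAt q ((Real.cos (μ * t) * μ) * a t + Real.sin (μ * t) * (μ * b t)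
        + ((-Real.sin (μ * t) * μ) * b t + Real.cos (μ * t) * (-μ * a t))) t := by
      rw [hqdef]
      exact (hs.mul (ha' t)).add (hc.mul (hb' t))
    have h2 : (Real.cos (μ * t) * μ) * a t + Real.sin (μ * t) * (μ * b t)
        + ((-Real.sin (μ * t) * μ) * b t + Real.cos (μ * t) * (-μ * a t)) = 0 := by ring
    rw [h2] at h1
    exact h1
  have hpconst : p 0 = p (2 * π) :=
    is_const_of_deriv_eq_zero (fun t => (hp' t).differentiableAt)
      (fun t => (hp' t).deriv) 0 (2 * π)
  have hqconst : q 0 = q (2 * π) :=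
    is_const_of_deriv_eq_zero (fun t => (hq' t).differentiableAt)
      (fun t => (hq' t).deriv) 0 (2 * π)
  -- periodicity
  have hper : ∀ i, W i (2 * π) = W i 0 := by
    intro i
    have : AQ j k ε (2 * π) = AQ j k ε 0 := by
      funext x y
      simp [AQ, uvec, Real.cos_two_pi, Real.sin_two_pi]
    simp only [hWdef, Wf, this]
  -- evaluate the constancy relations
  have ha2π : a (2 * π) = a 0 := by
    rw [hadef]
    simp only [Real.cos_two_pi, Real.sin_two_pi, Real.cos_zero, Real.sin_zero, hper]
  have hb2π : b (2 * π) = b 0 := by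
    rw [hbdef]
    simp only [Real.cos_two_pi, Real.sin_two_pi, Real.cos_zero, Real.sin_zero, hper]
  have heq1 : Real.cos (μ * (2 * π)) * a 0 - Real.sin (μ * (2 * π)) * b 0 = a 0 := by
    have e0 : p 0 = a 0 := by simp only [hpdef]; simp
    have e1 : p (2 * π) = Real.cos (μ * (2 * π)) * a 0 - Real.sin (μ * (2 * π)) * b 0 := by
      simp only [hpdef]
      rw [ha2π, hb2π]
    linarith [hpconst, e0, e1]
  have heq2 : Real.sin (μ * (2 * π)) * a 0 + Real.cos (μ * (2 * π)) * b 0 = b 0 := by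
    have e0 : q 0 = b 0 := by simp only [hqdef]; simp
    have e1 : q (2 * π) = Real.sin (μ * (2 * π)) * a 0 + Real.cos (μ * (2 * π)) * b 0 := by
      simp only [hqdef]
      rw [ha2π, hb2π]
    linarith [hqconst, e0, e1]
  -- the holonomy angle is nontrivial
  have hcne : Real.cos (μ * (2 * π)) ≠ 1 := by
    intro h
    have hb1 : μ * (2 * π) < 2 * π := by nlinarith
    have hb2 : -(2 * π) < μ * (2 * π) := by nlinarith
    have := (Real.cos_eq_one_iff_of_lt_of_lt hb2 hb1).mp h
    nlinarith
  -- conclude a 0 = b 0 = 0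
  have hab : a 0 = 0 ∧ b 0 = 0 := by
    have hkey : (1 - Real.cos (μ * (2 * π))) * (a 0 ^ 2 + b 0 ^ 2) = 0 := by
      linear_combination (-(a 0)) * heq1 - b 0 * heq2
    have h1 : (1 : ℝ) - Real.cos (μ * (2 * π)) ≠ 0 := by
      intro h; apply hcne; linarith
    have h2 : a 0 ^ 2 + b 0 ^ 2 = 0 := by
      rcases mul_eq_zero.mp hkey with h | h
      · exact absurd h h1
      · exact h
    have ha : a 0 ^ 2 = 0 := le_antisymm (by nlinarith [sq_nonneg (b 0)]) (sq_nonneg _)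
    have hb : b 0 ^ 2 = 0 := le_antisymm (by nlinarith [sq_nonneg (a 0)]) (sq_nonneg _)
    exact ⟨pow_eq_zero_iff two_ne_zero |>.mp ha, pow_eq_zero_iff two_ne_zero |>.mp hb⟩
  -- unpack
  have ha0 : -Real.sin ε * W 2 0 + Real.cos ε * W j 0 = 0 := by
    have := hab.1
    rw [hadef] at this
    simpa using this
  have hb0 : W k 0 = 0 := by
    have := hab.2
    rw [hbdef] at this
    simpa using this
  have hS0 : Real.cos ε * W 2 0 + Real.sin ε * W j 0 = 0 := by
    have := hS 0
    simpa using this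
  have h2z : W 2 0 = 0 := by
    have hεs := Real.sin_sq_add_cos_sq ε
    linear_combination Real.cos ε * hS0 - Real.sin ε * ha0 - W 2 0 * hεs
  have hjz : W j 0 = 0 := by
    have : Real.cos ε * W j 0 = 0 := by linear_combination ha0 + Real.sin ε * h2z
    rcases mul_eq_zero.mp this with h | h
    · exact absurd h (ne_of_gt hcos)
    · exact h
  exact ⟨h2z, hjz, hb0⟩
end Key

lemma continuous_AQ_eps (j k : Fin 8) : Continuous (fun ε => AQ j k ε 0) := by
  have : (fun ε => AQ j k ε 0) = (BQ j k) ∘ (fun ε : ℝ => (ε, Real.cos 0, Real.sin 0)) := by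
    funext ε; exact (BQ_eq j k ε 0).symm
  rw [this]
  exact (continuous_BQ j k).comp (by fun_prop)



/-- There is no parallel local section of the sphere bundle
`E¹_{3,8} → G(3,8)` near `P₀ = e₀∧e₁∧e₂`: no smooth map `V`, defined on a
neighborhood of `P₀` in the space of 3-planes (encoded as orthogonal
projection matrices of rank 3), with `V(P)` a unit vector orthogonal to
`P`, whose covariant derivative `π_{Q_t^⊥}((V∘Q)')` vanishes along every
smooth curve `Q` of 3-planes in the neighborhood. -/
theorem stmt13 :
    ¬ ∃ (U : Set Mat8) (V : Mat8 → EuclideanSpace ℝ (Fin 8)),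
      U ∈ nhds P₀ ∧ ContDiffOn ℝ (⊤ : ℕ∞) V U ∧
      (∀ A ∈ U, IsProj3 A →
        ‖V A‖ = 1 ∧ (Matrix.of A).mulVec (fun i => V A i) = 0) ∧
      (∀ Q : ℝ → Mat8, ContDiff ℝ (⊤ : ℕ∞) Q → (∀ t, Q t ∈ U ∧ IsProj3 (Q t)) →
        ∀ t : ℝ,
          (1 - Matrix.of (Q t)).mulVec
            (fun i => deriv (fun s => V (Q s) i) t) = 0) := by
  rintro ⟨U, V, hU, hV, hSec, hPar⟩
  have hπ := Real.pi_pos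
  set U' : Set Mat8 := interior U with hU'def
  have hU'o : IsOpen U' := isOpen_interior
  have hP₀ : P₀ ∈ U' := mem_interior_iff_mem_nhds.mpr hU
  have hV' : ContDiffOn ℝ (⊤ : ℕ∞) V U' := hV.mono interior_subset
  have hOrth' : ∀ A ∈ U', IsProj3 A → (Matrix.of A).mulVec (fun i => V A i) = 0 :=
    fun A hA h3 => (hSec A (interior_subset hA) h3).2
  have hPar' : ∀ Q : ℝ → Mat8, ContDiff ℝ (⊤ : ℕ∞) Q → (∀ t, Q t ∈ U' ∧ IsProj3 (Q t)) →
      ∀ t : ℝ, (1 - Matrix.of (Q t)).mulVec (fun i => deriv (fun s => V (Q s) i) t) = 0 :=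
    fun Q hQ hmem t => hPar Q hQ (fun s => ⟨interior_subset (hmem s).1, (hmem s).2⟩) t
  -- continuity of V at P₀ (coordinatewise)
  have hVc : ∀ i : Fin 8, ContinuousAt (fun A : Mat8 => V A i) P₀ := by
    intro i
    have h1 : ContinuousAt V P₀ :=
      (hV'.continuousOn.continuousAt (hU'o.mem_nhds hP₀))
    exact (EuclideanSpace.proj i).continuous.continuousAt.comp h1
  -- for every admissible pair (j,k), the j-th and k-th coordinates of V P₀ vanish
  have hpair : ∀ j k : Fin 8, 2 < (j:ℕ) → 2 < (k:ℕ) → j ≠ k →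
      V P₀ j = 0 ∧ V P₀ k = 0 := by
    intro j k hj hk hjk
    -- tube lemma to find small ε
    have htube : ∀ᶠ ε in nhds (0:ℝ),
        ∀ q ∈ (Set.Icc (-1:ℝ) 1 ×ˢ Set.Icc (-1:ℝ) 1), BQ j k (ε, q) ∈ U' := by
      apply IsCompact.eventually_forall_of_forall_eventually
        (isCompact_Icc.prod isCompact_Icc)
      intro q _
      have hc : ContinuousAt (fun z : ℝ × ℝ × ℝ => BQ j k z) (0, q) :=
        (continuous_BQ j k).continuousAt
      have hm : U' ∈ nhds (BQ j k (0, q)) := by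
        rw [BQ_zero]; exact hU'o.mem_nhds hP₀
      exact hc.eventually_mem hm
    have hgood : ∀ᶠ ε in nhdsWithin (0:ℝ) (Set.Ioi 0),
        V (AQ j k ε 0) j = 0 ∧ V (AQ j k ε 0) k = 0 := by
      have h1 : ∀ᶠ ε in nhdsWithin (0:ℝ) (Set.Ioi 0),
          ∀ q ∈ (Set.Icc (-1:ℝ) 1 ×ˢ Set.Icc (-1:ℝ) 1), BQ j k (ε, q) ∈ U' :=
        htube.filter_mono nhdsWithin_le_nhds
      have h2 : ∀ᶠ ε in nhdsWithin (0:ℝ) (Set.Ioi 0), ε ∈ Set.Ioo (0:ℝ) (π/2) := by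
        have hmem : Set.Ioo (0:ℝ) (π/2) ∈ nhdsWithin (0:ℝ) (Set.Ioi 0) :=
          Ioo_mem_nhdsGT_of_mem ⟨le_refl 0, by linarith⟩
        exact Filter.eventually_of_mem hmem fun x hx => hx
      filter_upwards [h1, h2] with ε hε1 hε2
      have hmem : ∀ t, AQ j k ε t ∈ U' := by
        intro t
        rw [← BQ_eq]
        exact hε1 (Real.cos t, Real.sin t)
          ⟨⟨Real.neg_one_le_cos t, Real.cos_le_one t⟩,
           ⟨Real.neg_one_le_sin t, Real.sin_le_one t⟩⟩
      have := key hU'o hV' hOrth' hPar' hj hk hjk hε2.1 hε2.2 hmem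
      exact ⟨this.2.1, this.2.2⟩
    -- pass to the limit ε → 0⁺
    have hlim : ∀ i : Fin 8, Filter.Tendsto (fun ε => V (AQ j k ε 0) i)
        (nhdsWithin (0:ℝ) (Set.Ioi 0)) (nhds (V P₀ i)) := by
      intro i
      have h1 : ContinuousAt (fun ε => V (AQ j k ε 0) i) 0 := by
        have h2 : ContinuousAt (fun ε => AQ j k ε 0) 0 :=
          (continuous_AQ_eps j k).continuousAt
        have h3 : ContinuousAt (fun A : Mat8 => V A i) (AQ j k 0 0) := by
          rw [AQ_eps_zero]; exact hVc i
        have h4 := ContinuousAt.comp (f := fun ε : ℝ => AQ j k ε 0)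
          (g := fun A : Mat8 => V A i) (x := (0:ℝ)) h3 h2
        exact h4
      have h5 := h1.tendsto.mono_left (nhdsWithin_le_nhds (s := Set.Ioi (0:ℝ)))
      rwa [AQ_eps_zero j k 0] at h5
    constructor
    · refine tendsto_nhds_unique (hlim j) ?_
      refine Filter.Tendsto.congr' ?_ tendsto_const_nhds
      filter_upwards [hgood] with ε hε using hε.1.symm
    · refine tendsto_nhds_unique (hlim k) ?_
      refine Filter.Tendsto.congr' ?_ tendsto_const_nhds
      filter_upwards [hgood] with ε hε using hε.2.symm
  -- the first three coordinates vanish by orthogonality at P₀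
  have hlow : ∀ i : Fin 8, (i:ℕ) < 3 → V P₀ i = 0 := by
    intro i hi
    have horth := (hSec P₀ (mem_of_mem_nhds hU) isProj3_P₀).2
    have hcf := congrFun horth i
    simp only [Pi.zero_apply] at hcf
    have hsum : ∑ m, P₀ i m * V P₀ m = V P₀ i := by
      rw [Finset.sum_eq_single i]
      · simp [P₀, hi]
      · intro m _ hmi
        have : ¬(i = m ∧ (i:ℕ) < 3) := fun h => hmi h.1.symm
        simp [P₀, this]
      · intro h; exact absurd (Finset.mem_univ i) h
    rw [← hsum]
    exact hcf
  -- hence V P₀ = 0, contradicting ‖V P₀‖ = 1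
  have h34 := hpair 3 4 (by decide) (by decide) (by decide)
  have h56 := hpair 5 6 (by decide) (by decide) (by decide)
  have h73 := hpair 7 3 (by decide) (by decide) (by decide)
  have hzero : V P₀ = 0 := by
    ext i
    fin_cases i
    · exact hlow 0 (by decide)
    · exact hlow 1 (by decide)
    · exact hlow 2 (by decide)
    · exact h34.1
    · exact h34.2
    · exact h56.1
    · exact h56.2
    · exact h73.1
  have hn := (hSec P₀ (mem_of_mem_nhds hU) isProj3_P₀).1
  rw [hzero, norm_zero] at hn
  norm_num at hn
end
end

section
/- With notation as in the computation of second covariant derivatives of σ₃ along coordinate geodesics of G(3,8): for ℓ ∈ {0,1,2} and j ∈ {3,...,7}, the second covariant derivative ∇_{e_j^ℓ}∇_{E_j^ℓ}σ₃ at e_0∧e_1∧e_2 equals (δ_{j3} - 1) e_3. Consequently the rough Laplacian satisfies Δσ₃(e_0∧e_1∧e_2) = -12 e_3 = -12 σ₃(e_0∧e_1∧e_2). -/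
open scoped RealInnerProductSpace

noncomputable section

def l0 (l : Fin 3) : Fin 8 := Fin.castLE (by norm_num) l
def l1 (l : Fin 3) : Fin 8 := Fin.castLE (by norm_num) (l + 1)
def l2 (l : Fin 3) : Fin 8 := Fin.castLE (by norm_num) (l + 2)

/-- Orthogonal projection of ℝ⁸ onto `(span{e₀,e₁,e₂})^⊥`. -/
def proj012 (x : Oct) : Oct :=
  x - x 0 • octe 0 - x 1 • octe 1 - x 2 • octe 2

/-- `σ₃` evaluated along the surface `P_{t,s} = exp(t e_j^ℓ) γ_j^ℓ(s)
= γ_j^ℓ(t+s)` of `G(3,8)` (indices mod 3). -/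
def F15 (l : Fin 3) (j : Fin 8) (t s : ℝ) : Oct :=
  X3 (Real.cos (t + s) • octe (l0 l) + Real.sin (t + s) • octe j)
    (octe (l1 l)) (octe (l2 l))

def S1 (l : Fin 3) (j : Fin 8) : Oct := deriv (fun s => F15 l j 0 s) 0

def S2 (l : Fin 3) (j : Fin 8) : Oct :=
  deriv (fun t => deriv (fun s => F15 l j t s) 0) 0

/-- The second covariant derivative `∇_{e_j^ℓ}∇_{E_j^ℓ}σ₃` at
`e₀∧e₁∧e₂`, computed as `π₀(π₀' S₁ + S₂)` where
`π₀' = -(e_j ⊗ e^ℓ + e_ℓ ⊗ e^j)` is the derivative of the family of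
normal projections along the geodesic. -/
def covD2 (l : Fin 3) (j : Fin 8) : Oct :=
  proj012 ((-(S1 l j (l0 l))) • octe j - S1 l j j • octe (l0 l) + S2 l j)

/-!
Along the geodesic, linearity of `X` in its first slot gives
`σ₃ = cos (t+s) • X(e_ℓ, e_{ℓ+1}, e_{ℓ+2}) + sin (t+s) • X(e_j, e_{ℓ+1}, e_{ℓ+2})`,
so `S₁ = X(e_j, e_{ℓ+1}, e_{ℓ+2})` and `S₂ = -X(e_ℓ, e_{ℓ+1}, e_{ℓ+2}) = -e₃`.
The correction term only sees two coefficients of `S₁`: its `e_j`-coefficient, which vanishes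
since `X` is orthogonal to its arguments, and its `e_ℓ`-coefficient, which by skew-symmetry of
`⟪X(u,v,w), x⟫` is `-⟪e₃, e_j⟫ = -δ_{j3}`. All of these are read off the structure constants.
-/

lemma octMul_add_left (x y z : Oct) : octMul (x + y) z = octMul x z + octMul y z := by
  ext k
  simp [octMul, add_mul, Finset.sum_add_distrib]

lemma octMul_smul_left (a : ℝ) (x z : Oct) : octMul (a • x) z = a • octMul x z := by
  ext k
  simp [octMul, Finset.mul_sum, mul_assoc]

lemma X3_smul_add_smul_left (a b : ℝ) (u u' v w : Oct) :
    X3 (a • u + b • u') v w = a • X3 u v w + b • X3 u' v w := by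
  unfold X3
  rw [octMul_add_left, octMul_smul_left, octMul_smul_left, inner_add_left, inner_add_right,
    real_inner_smul_left, real_inner_smul_left, real_inner_smul_right, real_inner_smul_right]
  module

lemma hasDerivAt_cos_add_smul_add_sin_add_smul {E : Type*} [NormedAddCommGroup E]
    [NormedSpace ℝ E] (a b : E) (t : ℝ) :
    HasDerivAt (fun s => Real.cos (t + s) • a + Real.sin (t + s) • b)
      (-Real.sin t • a + Real.cos t • b) 0 := by
  have hcos := (Real.hasDerivAt_cos (t + 0)).comp_const_add t 0
  have hsin := (Real.hasDerivAt_sin (t + 0)).comp_const_add t 0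
  simpa using (hcos.smul_const a).fun_add (hsin.smul_const b)

lemma F15_eq (l : Fin 3) (j : Fin 8) (t s : ℝ) :
    F15 l j t s = Real.cos (t + s) • X3 (octe (l0 l)) (octe (l1 l)) (octe (l2 l))
      + Real.sin (t + s) • X3 (octe j) (octe (l1 l)) (octe (l2 l)) :=
  X3_smul_add_smul_left _ _ _ _ _ _

lemma deriv_F15 (l : Fin 3) (j : Fin 8) (t : ℝ) :
    deriv (fun s => F15 l j t s) 0 = -Real.sin t • X3 (octe (l0 l)) (octe (l1 l)) (octe (l2 l))
      + Real.cos t • X3 (octe j) (octe (l1 l)) (octe (l2 l)) := by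
  simp only [F15_eq]
  exact (hasDerivAt_cos_add_smul_add_sin_add_smul _ _ t).deriv

lemma S1_eq (l : Fin 3) (j : Fin 8) : S1 l j = X3 (octe j) (octe (l1 l)) (octe (l2 l)) := by
  simp [S1, deriv_F15]

lemma S2_eq (l : Fin 3) (j : Fin 8) :
    S2 l j = -X3 (octe (l0 l)) (octe (l1 l)) (octe (l2 l)) := by
  have h := ((Real.hasDerivAt_sin 0).neg.smul_const
    (X3 (octe (l0 l)) (octe (l1 l)) (octe (l2 l)))).add
    ((Real.hasDerivAt_cos 0).smul_const (X3 (octe j) (octe (l1 l)) (octe (l2 l))))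
  simpa [S2, deriv_F15] using h.deriv

lemma inner_octe (a b : Fin 8) : ⟪octe a, octe b⟫ = if a = b then 1 else 0 := by
  simp [octe, EuclideanSpace.inner_single_left, PiLp.single_apply]

lemma octMul_octe_left_apply (a : Fin 8) (y : Oct) (k : Fin 8) :
    octMul (octe a) y k = ∑ m, y m * structC a m k := by
  rw [octMul, PiLp.toLp_apply, Finset.sum_comm]
  simp [octe, PiLp.single_apply, ite_mul]

lemma octMul_octe_octe (a b : Fin 8) : octMul (octe a) (octe b) = WithLp.toLp 2 (structC a b) := by
  ext k
  rw [octMul_octe_left_apply]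
  simp [octe, PiLp.single_apply, ite_mul]

lemma octConj_octe (b : Fin 8) : octConj (octe b) = (if b = 0 then 1 else -1 : ℝ) • octe b := by
  ext k
  by_cases hk : k = b <;> by_cases hb : b = 0 <;> simp_all [octConj, octe, PiLp.single_apply]

lemma X3_octe_apply {a b c : Fin 8} (hab : a ≠ b) (hbc : b ≠ c) (hca : c ≠ a) (k : Fin 8) :
    X3 (octe a) (octe b) (octe c) k =
      (if b = 0 then -1 else 1) * ∑ m, structC b c m * structC a m k := by
  rw [X3, octConj_octe, octMul_smul_left, octMul_octe_octe, inner_octe, inner_octe, inner_octe]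
  split_ifs <;> simp_all [octMul_octe_left_apply]

lemma l0_ne_l1 (l : Fin 3) : l0 l ≠ l1 l := by fin_cases l <;> decide
lemma l1_ne_l2 (l : Fin 3) : l1 l ≠ l2 l := by fin_cases l <;> decide
lemma l2_ne_l0 (l : Fin 3) : l2 l ≠ l0 l := by fin_cases l <;> decide

lemma X3_octe_l0_l1_l2 (l : Fin 3) : X3 (octe (l0 l)) (octe (l1 l)) (octe (l2 l)) = octe 3 := by
  ext k
  rw [X3_octe_apply (l0_ne_l1 l) (l1_ne_l2 l) (l2_ne_l0 l)]
  fin_cases l <;> fin_cases k <;>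
    simp [l0, l1, l2, octe, Fin.sum_univ_eight, structC, eps, plusTriples]

lemma ne_l1_of_three_le (l : Fin 3) {j : Fin 8} (hj : 3 ≤ (j : ℕ)) : j ≠ l1 l := by
  apply ne_of_gt
  rw [Fin.lt_def]
  fin_cases l <;> simp [l1] <;> omega

lemma l2_ne_of_three_le (l : Fin 3) {j : Fin 8} (hj : 3 ≤ (j : ℕ)) : l2 l ≠ j := by
  apply ne_of_lt
  rw [Fin.lt_def]
  fin_cases l <;> simp [l2] <;> omega

lemma X3_octe_l1_l2_apply_self (l : Fin 3) {j : Fin 8} (hj : 3 ≤ (j : ℕ)) :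
    X3 (octe j) (octe (l1 l)) (octe (l2 l)) j = 0 := by
  rw [X3_octe_apply (ne_l1_of_three_le l hj) (l1_ne_l2 l) (l2_ne_of_three_le l hj)]
  fin_cases l <;> fin_cases j <;> simp at hj <;>
    simp [l1, l2, structC, eps, plusTriples]

lemma X3_octe_l1_l2_apply_l0 (l : Fin 3) {j : Fin 8} (hj : 3 ≤ (j : ℕ)) :
    X3 (octe j) (octe (l1 l)) (octe (l2 l)) (l0 l) = if j = 3 then -1 else 0 := by
  rw [X3_octe_apply (ne_l1_of_three_le l hj) (l1_ne_l2 l) (l2_ne_of_three_le l hj)]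
  fin_cases l <;> fin_cases j <;> simp at hj <;>
    simp [l0, l1, l2, Fin.sum_univ_eight, structC, eps, plusTriples]

lemma covD2_of_three_le (l : Fin 3) {j : Fin 8} (hj : 3 ≤ (j : ℕ)) :
    covD2 l j = if j = 3 then 0 else -octe 3 := by
  rw [covD2, S1_eq, S2_eq, X3_octe_l1_l2_apply_self l hj, X3_octe_l1_l2_apply_l0 l hj,
    X3_octe_l0_l1_l2]
  split_ifs with h3 <;> ext k <;> fin_cases k <;> simp [h3, proj012, octe]

lemma sum_covD2 (l : Fin 3) :
    ∑ j ∈ Finset.univ.filter (fun j : Fin 8 => 3 ≤ (j : ℕ)), covD2 l j = (-4 : ℝ) • octe 3 := by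
  have hrange : Finset.univ.filter (fun j : Fin 8 => 3 ≤ (j : ℕ)) = {3, 4, 5, 6, 7} := by decide
  rw [Finset.sum_congr rfl fun j hj => covD2_of_three_le l (Finset.mem_filter.1 hj).2, hrange]
  simp [Finset.sum_insert]
  module

/-- `∇_{e_j^ℓ}∇_{E_j^ℓ}σ₃ = (δ_{j3} - 1) e₃` at `e₀∧e₁∧e₂`, and hence the
rough Laplacian `Δσ₃(e₀∧e₁∧e₂) = Σ_{ℓ,j} ∇_{e_j^ℓ}∇_{E_j^ℓ}σ₃ = -12 e₃
= -12 σ₃(e₀∧e₁∧e₂)`. -/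
theorem stmt15 :
    (∀ (l : Fin 3) (j : Fin 8), 3 ≤ (j : ℕ) →
      covD2 l j = if j = 3 then 0 else -octe 3) ∧
    (∑ l : Fin 3, ∑ j ∈ Finset.univ.filter (fun j : Fin 8 => 3 ≤ (j : ℕ)),
        covD2 l j) = (-12 : ℝ) • octe 3 ∧
    (-12 : ℝ) • octe 3 = (-12 : ℝ) • X3 (octe 0) (octe 1) (octe 2) := by
  refine ⟨fun l j hj => covD2_of_three_le l hj, ?_, by rw [← X3_octe_l0_l1_l2 0]; rfl⟩
  simp only [sum_covD2, Finset.sum_const, Finset.card_univ, Fintype.card_fin]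
  module
end
end
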